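/- Let 1 < p < ∞, let w : ℤ → (0,∞) be a symmetric weight (w_{−k} = w_k for all k), and let c, d : ℤ → ℂ have finite multiplier norms N_{p,w}(c) and N_{p,w}(d) on ℓ^p(ℤ,w). Then for every n ∈ ℤ the series e(n) := ∑_{k∈ℤ} c(k) d(n−k) converges absolutely, and the sequence e satisfies N_{p,w}(e) ≤ N_{p,w}(c) · N_{p,w}(d). (The sequence e is the sequence of Fourier coefficients of the pointwise product of the two L^∞ symbols whose Fourier coefficients are c and d.) -/

import Mathlib

open scoped ENNReal

/-- The norm of `φ` in the weighted space `ℓ^r(ℤ,u)` (with value in `[0,∞]`). -/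
noncomputable def wNorm (r : ℝ) (u : ℤ → ℝ) (φ : ℤ → ℂ) : ℝ≥0∞ :=
  (∑' k : ℤ, ENNReal.ofReal (‖φ k‖ * u k) ^ r) ^ (1 / r)

/-- Convolution of a sequence `c : ℤ → ℂ` with a finitely supported `φ`. -/
noncomputable def conv (c : ℤ → ℂ) (φ : ℤ →₀ ℂ) : ℤ → ℂ :=
  fun j => ∑ k ∈ φ.support, c (j - k) * φ k

/-- The multiplier norm `N_{r,u}(c)` of a sequence `c : ℤ → ℂ` on `ℓ^r(ℤ,u)`. -/
noncomputable def multNorm (r : ℝ) (u : ℤ → ℝ) (c : ℤ → ℂ) : ℝ≥0∞ :=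
  ⨆ φ : {φ : ℤ →₀ ℂ // φ ≠ 0}, wNorm r u (conv c φ.1) / wNorm r u (φ.1 : ℤ → ℂ)

/-!
Let `q` be the exponent conjugate to `p`. Testing the multiplier `c` at the point `n` against the
extremal Hölder sequence `ψ_k = conj c(n-k) · |c(n-k)/w_k|^(q-2) / w_k²` shows that
`k ↦ c(n-k)/w_k` lies in `ℓ^q` with norm at most `N(c)/w_n`; and `c = c * δ₀` lies in `ℓ^p(w)`.
Hölder's inequality then gives absolute convergence of `e = c * d`, and of `c * g` for every
`g ∈ ℓ^p(w)`. For finitely supported `φ` we have `e * φ = c * (d * φ)`, and `c * g` is the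
pointwise limit of `c * g_F` over the finite truncations `g_F` of `g = d * φ`; since the weighted
norm is lower semicontinuous under pointwise convergence,
`‖e * φ‖ ≤ N(c) ‖d * φ‖ ≤ N(c) N(d) ‖φ‖`.
-/

open Filter Topology

section WeightedNorm

variable {p : ℝ} {w : ℤ → ℝ}

lemma wNorm_rpow (hp : 0 < p) (φ : ℤ → ℂ) :
    wNorm p w φ ^ p = ∑' k, ENNReal.ofReal (‖φ k‖ * w k) ^ p := by
  rw [wNorm, ← ENNReal.rpow_mul, one_div_mul_cancel hp.ne', ENNReal.rpow_one]

lemma wNorm_le_iff (hp : 0 < p) {φ : ℤ → ℂ} {B : ℝ≥0∞} :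
    wNorm p w φ ≤ B ↔ ∑' k, ENNReal.ofReal (‖φ k‖ * w k) ^ p ≤ B ^ p := by
  rw [wNorm, one_div, ENNReal.rpow_inv_le_iff hp]

lemma wNorm_zero (hp : 0 < p) : wNorm p w 0 = 0 := by
  simp [wNorm, ENNReal.zero_rpow_of_pos hp, hp]

lemma ofReal_mul_le_wNorm (hp : 0 < p) (φ : ℤ → ℂ) (n : ℤ) :
    ENNReal.ofReal (‖φ n‖ * w n) ≤ wNorm p w φ := by
  rw [← ENNReal.rpow_le_rpow_iff hp, wNorm_rpow hp]
  exact ENNReal.le_tsum (f := fun k => ENNReal.ofReal (‖φ k‖ * w k) ^ p) n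

lemma wNorm_mono (hp : 0 < p) (hw : ∀ k, 0 ≤ w k) {φ ψ : ℤ → ℂ} (h : ∀ k, ‖φ k‖ ≤ ‖ψ k‖) :
    wNorm p w φ ≤ wNorm p w ψ := by
  rw [wNorm_le_iff hp, wNorm_rpow hp]
  gcongr with k
  exacts [hw k, h k]

lemma wNorm_pos (hp : 0 < p) (hw : ∀ k, 0 < w k) {φ : ℤ → ℂ} (hφ : φ ≠ 0) :
    0 < wNorm p w φ := by
  obtain ⟨k, hk⟩ := Function.ne_iff.mp hφ
  refine lt_of_lt_of_le ?_ (ofReal_mul_le_wNorm hp φ k)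
  exact ENNReal.ofReal_pos.mpr (mul_pos (norm_pos_iff.mpr hk) (hw k))

lemma wNorm_finsupp_ne_top (hp : 0 < p) (φ : ℤ →₀ ℂ) : wNorm p w φ ≠ ⊤ := by
  have hsum : ∑' k, ENNReal.ofReal (‖φ k‖ * w k) ^ p
      = ∑ k ∈ φ.support, ENNReal.ofReal (‖φ k‖ * w k) ^ p :=
    tsum_eq_sum fun k hk => by simp [Finsupp.notMem_support_iff.mp hk, ENNReal.zero_rpow_of_pos hp]
  rw [wNorm, hsum]
  exact ENNReal.rpow_ne_top_of_nonneg (by positivity) <| ENNReal.sum_ne_top.mpr fun k _ =>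
    ENNReal.rpow_ne_top_of_nonneg hp.le ENNReal.ofReal_ne_top

lemma summable_of_wNorm_ne_top (hp : 0 < p) (hw : ∀ k, 0 ≤ w k) {φ : ℤ → ℂ}
    (hφ : wNorm p w φ ≠ ⊤) : Summable fun k => (‖φ k‖ * w k) ^ p := by
  have hsum : ∑' k, ENNReal.ofReal ((‖φ k‖ * w k) ^ p) ≠ ⊤ := by
    simp_rw [← ENNReal.ofReal_rpow_of_nonneg (mul_nonneg (norm_nonneg _) (hw _)) hp.le,
      ← wNorm_rpow hp]
    exact ENNReal.rpow_ne_top_of_nonneg hp.le hφ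
  exact (ENNReal.summable_toReal hsum).congr fun k =>
    ENNReal.toReal_ofReal (Real.rpow_nonneg (mul_nonneg (norm_nonneg _) (hw k)) _)

lemma wNorm_le_of_tendsto (hp : 0 < p) {ι : Type*} {l : Filter ι} [l.NeBot] {φ : ι → ℤ → ℂ}
    {ψ : ℤ → ℂ} (hlim : ∀ j, Tendsto (fun i => φ i j) l (𝓝 (ψ j))) {B : ℝ≥0∞}
    (hB : ∀ i, wNorm p w (φ i) ≤ B) : wNorm p w ψ ≤ B := by
  rw [wNorm_le_iff hp, ENNReal.tsum_eq_iSup_sum]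
  refine iSup_le fun F => le_of_tendsto' (x := l) (tendsto_finsetSum F fun j _ => ?_) fun i =>
    (ENNReal.sum_le_tsum F).trans ((wNorm_le_iff hp).mp (hB i))
  have hcont : Continuous fun z : ℂ => ENNReal.ofReal (‖z‖ * w j) ^ p :=
    (ENNReal.continuous_rpow_const.comp ENNReal.continuous_ofReal).comp (by fun_prop)
  exact (hcont.tendsto _).comp (hlim j)

end WeightedNorm

section Multiplier

variable {p : ℝ} {w : ℤ → ℝ}

lemma conv_eq_sum (c : ℤ → ℂ) {φ : ℤ →₀ ℂ} {F : Finset ℤ} (h : φ.support ⊆ F) (j : ℤ) :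
    conv c φ j = ∑ k ∈ F, c (j - k) * φ k :=
  Finset.sum_subset h fun k _ hk => by rw [Finsupp.notMem_support_iff.mp hk, mul_zero]

lemma conv_indicator (c g : ℤ → ℂ) (F : Finset ℤ) (j : ℤ) :
    conv c (Finsupp.indicator F fun k _ => g k) j = ∑ k ∈ F, c (j - k) * g k := by
  rw [conv_eq_sum c (Finsupp.support_indicator_subset _ _)]
  exact Finset.sum_congr rfl fun k hk => by rw [Finsupp.indicator_of_mem hk]

lemma conv_single_zero_one (c : ℤ → ℂ) : conv c (Finsupp.single 0 1) = c := by
  ext j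
  simp [conv]

lemma wNorm_conv_le (hp : 0 < p) (hw : ∀ k, 0 < w k) (c : ℤ → ℂ) (φ : ℤ →₀ ℂ) :
    wNorm p w (conv c φ) ≤ multNorm p w c * wNorm p w φ := by
  rcases eq_or_ne φ 0 with rfl | hφ
  · have hconv : conv c 0 = 0 := by ext; simp [conv]
    simp [hconv, wNorm_zero hp]
  · have hφ' : (φ : ℤ → ℂ) ≠ 0 := by simpa using hφ
    refine (ENNReal.div_le_iff_le_mul (.inl (wNorm_pos hp hw hφ').ne')
      (.inl (wNorm_finsupp_ne_top hp φ))).mp ?_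
    exact le_iSup (fun φ : {φ : ℤ →₀ ℂ // φ ≠ 0} =>
      wNorm p w (conv c φ.1) / wNorm p w (φ.1 : ℤ → ℂ)) ⟨φ, hφ⟩

lemma multNorm_le {c : ℤ → ℂ} {B : ℝ≥0∞}
    (h : ∀ φ : ℤ →₀ ℂ, wNorm p w (conv c φ) ≤ B * wNorm p w φ) : multNorm p w c ≤ B :=
  iSup_le fun φ => ENNReal.div_le_of_le_mul (h φ.1)

lemma wNorm_ne_top_of_multNorm_ne_top (hp : 0 < p) (hw : ∀ k, 0 < w k) {c : ℤ → ℂ}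
    (hc : multNorm p w c ≠ ⊤) : wNorm p w c ≠ ⊤ := by
  have h := wNorm_conv_le hp hw c (Finsupp.single 0 1)
  rw [conv_single_zero_one] at h
  exact ne_top_of_le_ne_top (ENNReal.mul_ne_top hc (wNorm_finsupp_ne_top hp _)) h

end Multiplier

section Duality

variable {p q : ℝ} {w : ℤ → ℝ}

lemma ENNReal.le_rpow_of_le_mul_rpow_one_div (hpq : p.HolderConjugate q)
    {x a : ℝ≥0∞} (hx : x ≠ ⊤) (h : x ≤ a * x ^ (1 / p)) : x ≤ a ^ q := by
  rcases eq_or_ne x 0 with rfl | hx0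
  · exact zero_le
  have hsplit : x = x ^ q⁻¹ * x ^ (1 / p) := by
    rw [one_div, ← ENNReal.rpow_add _ _ hx0 hx, add_comm, hpq.inv_add_inv_eq_one,
      ENNReal.rpow_one]
  have hxp0 : x ^ (1 / p) ≠ 0 := by simp [hx0, hx, hpq.pos]
  have hxpt : x ^ (1 / p) ≠ ⊤ := ENNReal.rpow_ne_top_of_nonneg hpq.one_div_nonneg hx
  rw [← ENNReal.rpow_inv_le_iff hpq.symm.pos]
  exact (ENNReal.mul_le_mul_iff_left hxp0 hxpt).mp (hsplit ▸ h)

lemma Real.mul_rpow_sub_two {x : ℝ} (hx : 0 ≤ x) (hq : q ≠ 1) :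
    x * x ^ (q - 2) = x ^ (q - 1) := by
  rw [show q - 1 = 1 + (q - 2) by ring, Real.rpow_add' hx (by contrapose! hq; linarith),
    Real.rpow_one]

lemma Real.sq_mul_rpow_sub_two {x : ℝ} (hx : 0 ≤ x) (hq : q ≠ 0) :
    x ^ 2 * x ^ (q - 2) = x ^ q := by
  rw [← Real.rpow_two, ← Real.rpow_add' hx (by simpa using hq), add_sub_cancel]

lemma sum_rpow_le_multNorm_div (hpq : p.HolderConjugate q) (hw : ∀ k, 0 < w k) (c : ℤ → ℂ)
    (n : ℤ) (F : Finset ℤ) :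
    ENNReal.ofReal (∑ k ∈ F, (‖c (n - k)‖ / w k) ^ q)
      ≤ (multNorm p w c / ENNReal.ofReal (w n)) ^ q := by
  set x : ℤ → ℝ := fun k => ‖c (n - k)‖ / w k with hx_def
  have hx : ∀ k, 0 ≤ x k := fun k => div_nonneg (norm_nonneg _) (hw k).le
  set S := ∑ k ∈ F, x k ^ q with hS_def
  have hS : 0 ≤ S := Finset.sum_nonneg fun k _ => Real.rpow_nonneg (hx k) q
  set ψ : ℤ →₀ ℂ := Finsupp.indicator F fun k _ =>
    starRingEnd ℂ (c (n - k)) * ((x k ^ (q - 2) / w k ^ 2 : ℝ) : ℂ)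
  have hψ_norm : ∀ k ∈ F, ‖ψ k‖ * w k = x k ^ (q - 1) := by
    intro k hk
    have hwk := (hw k).ne'
    rw [Finsupp.indicator_of_mem hk, norm_mul, Complex.norm_conj, Complex.norm_real,
      Real.norm_of_nonneg (div_nonneg (Real.rpow_nonneg (hx k) _) (sq_nonneg _)),
      ← Real.mul_rpow_sub_two (hx k) hpq.symm.lt.ne', hx_def]
    field_simp
  have hψ_conv : conv c ψ n = S := by
    rw [conv_indicator, hS_def]
    push_cast
    refine Finset.sum_congr rfl fun k _ => ?_
    rw [← mul_assoc, Complex.mul_conj', ← Real.sq_mul_rpow_sub_two (hx k) hpq.symm.ne_zero]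
    have hwk : (w k : ℂ) ≠ 0 := by exact_mod_cast (hw k).ne'
    simp only [hx_def]
    push_cast
    field_simp
  have hψ_wNorm : wNorm p w ψ = ENNReal.ofReal S ^ (1 / p) := by
    rw [wNorm, tsum_eq_sum (s := F) fun k hk => by
      simp [ψ, Finsupp.indicator_of_notMem hk, ENNReal.zero_rpow_of_pos hpq.pos]]
    rw [hS_def, ENNReal.ofReal_sum_of_nonneg fun k _ => Real.rpow_nonneg (hx k) q]
    refine congrArg (· ^ (1 / p)) (Finset.sum_congr rfl fun k hk => ?_)
    rw [hψ_norm k hk, ENNReal.ofReal_rpow_of_nonneg (Real.rpow_nonneg (hx k) _) hpq.nonneg,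
      ← Real.rpow_mul (hx k), hpq.symm.sub_one_mul_conj]
  refine ENNReal.le_rpow_of_le_mul_rpow_one_div hpq ENNReal.ofReal_ne_top ?_
  have hwn : ENNReal.ofReal (w n) ≠ 0 := by simpa using hw n
  rw [← hψ_wNorm, ← ENNReal.mul_div_right_comm,
    ENNReal.le_div_iff_mul_le (.inl hwn) (.inl ENNReal.ofReal_ne_top)]
  calc ENNReal.ofReal S * ENNReal.ofReal (w n) = ENNReal.ofReal (‖conv c ψ n‖ * w n) := by
        rw [hψ_conv, Complex.norm_real, Real.norm_of_nonneg hS, ENNReal.ofReal_mul hS]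
    _ ≤ wNorm p w (conv c ψ) := ofReal_mul_le_wNorm hpq.pos _ n
    _ ≤ multNorm p w c * wNorm p w ψ := wNorm_conv_le hpq.pos hw c ψ

end Duality

section Convolution

variable {p q : ℝ} {w : ℤ → ℝ}

lemma summable_rpow_div_of_multNorm_ne_top (hpq : p.HolderConjugate q) (hw : ∀ k, 0 < w k)
    {c : ℤ → ℂ} (hc : multNorm p w c ≠ ⊤) (n : ℤ) :
    Summable fun k => (‖c (n - k)‖ / w k) ^ q := by
  have hB : (multNorm p w c / ENNReal.ofReal (w n)) ^ q ≠ ⊤ :=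
    ENNReal.rpow_ne_top_of_nonneg hpq.symm.nonneg (ENNReal.div_ne_top hc (by simpa using hw n))
  exact summable_of_sum_le (fun k => Real.rpow_nonneg (div_nonneg (norm_nonneg _) (hw k).le) q)
    fun F => (ENNReal.ofReal_le_iff_le_toReal hB).mp (sum_rpow_le_multNorm_div hpq hw c n F)

lemma summable_norm_mul_of_multNorm_ne_top (hpq : p.HolderConjugate q) (hw : ∀ k, 0 < w k)
    {c : ℤ → ℂ} (hc : multNorm p w c ≠ ⊤) {g : ℤ → ℂ}
    (hg : Summable fun m => (‖g m‖ * w m) ^ p) (j : ℤ) :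
    Summable fun m => ‖c (j - m) * g m‖ := by
  refine (Real.summable_mul_of_Lp_Lq_of_nonneg hpq (fun m => mul_nonneg (norm_nonneg _) (hw m).le)
    (fun m => div_nonneg (norm_nonneg _) (hw m).le) hg
    (summable_rpow_div_of_multNorm_ne_top hpq hw hc j)).congr fun m => ?_
  have hwm := (hw m).ne'
  rw [norm_mul]
  field_simp

lemma wNorm_tsum_conv_le (hp : 1 < p) (hw : ∀ k, 0 < w k) {c : ℤ → ℂ}
    (hc : multNorm p w c ≠ ⊤) {g : ℤ → ℂ} (hg : wNorm p w g ≠ ⊤) :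
    wNorm p w (fun j => ∑' m, c (j - m) * g m) ≤ multNorm p w c * wNorm p w g := by
  have hpq := Real.HolderConjugate.conjExponent hp
  have hp0 : 0 < p := hpq.pos
  have hsum : ∀ j, Summable fun m => c (j - m) * g m := fun j =>
    (summable_norm_mul_of_multNorm_ne_top hpq hw hc
      (summable_of_wNorm_ne_top hp0 (fun k => (hw k).le) hg) j).of_norm
  refine wNorm_le_of_tendsto hp0 (l := atTop)
    (φ := fun F : Finset ℤ => conv c (Finsupp.indicator F fun k _ => g k)) (fun j => ?_) fun F => ?_
  · simp only [conv_indicator]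
    exact (hsum j).hasSum
  · refine (wNorm_conv_le hp0 hw c _).trans (mul_le_mul_right ?_ _)
    refine wNorm_mono hp0 (fun k => (hw k).le) fun k => ?_
    by_cases hk : k ∈ F
    · rw [Finsupp.indicator_of_mem hk]
    · simp [Finsupp.indicator_of_notMem hk]

lemma conv_tsum_conv {c d : ℤ → ℂ} (hcd : ∀ n, Summable fun k => c k * d (n - k))
    (φ : ℤ →₀ ℂ) (j : ℤ) :
    conv (fun n => ∑' k, c k * d (n - k)) φ j = ∑' m, c (j - m) * conv d φ m := by
  calc conv (fun n => ∑' k, c k * d (n - k)) φ j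
      = ∑ k ∈ φ.support, ∑' m, c m * d (j - k - m) * φ k :=
        Finset.sum_congr rfl fun k _ => tsum_mul_right.symm
    _ = ∑' m, c m * conv d φ (j - m) := by
        rw [← Summable.tsum_finsetSum fun k _ => (hcd (j - k)).mul_right (φ k)]
        refine tsum_congr fun m => ?_
        rw [conv, Finset.mul_sum]
        exact Finset.sum_congr rfl fun k _ => by rw [sub_right_comm]; ring
    _ = ∑' m, c (j - m) * conv d φ m := by
        rw [← (Equiv.subLeft j).tsum_eq]
        simp [sub_sub_cancel]

end Convolution

theorem multNorm_submultiplicative_general (p : ℝ) (hp : 1 < p) (w : ℤ → ℝ)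
    (hw : ∀ k, 0 < w k) (c d : ℤ → ℂ)
    (hc : multNorm p w c ≠ ⊤) (hd : multNorm p w d ≠ ⊤) :
    (∀ n : ℤ, Summable fun k : ℤ => ‖c k * d (n - k)‖) ∧
      multNorm p w (fun n => ∑' k : ℤ, c k * d (n - k)) ≤
        multNorm p w c * multNorm p w d := by
  have hpq := Real.HolderConjugate.conjExponent hp
  have hp0 : 0 < p := hpq.pos
  have hc_mem : Summable fun k => (‖c k‖ * w k) ^ p :=
    summable_of_wNorm_ne_top hp0 (fun k => (hw k).le) (wNorm_ne_top_of_multNorm_ne_top hp0 hw hc)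
  have hsum : ∀ n : ℤ, Summable fun k : ℤ => ‖c k * d (n - k)‖ := fun n =>
    (summable_norm_mul_of_multNorm_ne_top hpq hw hd hc_mem n).congr fun k => by rw [mul_comm]
  refine ⟨hsum, multNorm_le fun φ => ?_⟩
  have hdφ : wNorm p w (conv d φ) ≤ multNorm p w d * wNorm p w φ := wNorm_conv_le hp0 hw d φ
  have hdφ_ne_top : wNorm p w (conv d φ) ≠ ⊤ :=
    ne_top_of_le_ne_top (ENNReal.mul_ne_top hd (wNorm_finsupp_ne_top hp0 φ)) hdφ
  calc wNorm p w (conv (fun n => ∑' k : ℤ, c k * d (n - k)) φ)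
      = wNorm p w (fun j => ∑' m, c (j - m) * conv d φ m) := by
        congr 1
        exact funext (conv_tsum_conv (fun n => (hsum n).of_norm) φ)
    _ ≤ multNorm p w c * wNorm p w (conv d φ) := wNorm_tsum_conv_le hp hw hc hdφ_ne_top
    _ ≤ multNorm p w c * multNorm p w d * wNorm p w φ := by
        rw [mul_assoc]
        gcongr

/-- If `w` is a symmetric weight and `c`, `d` have finite multiplier norm on `ℓ^p(ℤ,w)`,
then for every `n` the series `e(n) = ∑_k c(k) d(n−k)` converges absolutely, and
`N_{p,w}(e) ≤ N_{p,w}(c) ⬝ N_{p,w}(d)`. -/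
theorem multNorm_submultiplicative (p : ℝ) (hp : 1 < p) (w : ℤ → ℝ)
    (hw : ∀ k, 0 < w k) (hsym : ∀ k : ℤ, w (-k) = w k) (c d : ℤ → ℂ)
    (hc : multNorm p w c ≠ ⊤) (hd : multNorm p w d ≠ ⊤) :
    (∀ n : ℤ, Summable fun k : ℤ => ‖c k * d (n - k)‖) ∧
      multNorm p w (fun n => ∑' k : ℤ, c k * d (n - k)) ≤
        multNorm p w c * multNorm p w d :=
  multNorm_submultiplicative_general p hp w hw c d hc hd
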